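/- arXiv:2506.23384 — 2 statements merged into one kernel-verified Lean document; each statement's English description precedes it below -/
import Mathlib

section
/- Let M be a nondeterministic finite automaton with a finite state type whose accepted language L(M) is a finite set. Then every accepting run of M (on any word) visits pairwise distinct states; consequently, for every c ≥ 1, the SSB(c)-language of M (the set of words having an accepting run in which each state occurs at most c times) equals L(M). -/
/-!
If some accepting run repeats a state `p`, then `p` is reachable from a start state, lies on a
loop labelled by a nonempty word `v`, and some word is accepted from `p`. Prefixing `v` to a
longest word accepted from `p` gives a longer one, so infinitely many words are accepted
from `p`, and hence by `M`.
-/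

/-- `RunFrom M q w ps` means: starting in state `q`, the list of states `ps` is a run of
`M` on the word `w` ending in an accepting state. -/
def RunFrom {α σ : Type*} (M : NFA α σ) : σ → List α → List σ → Prop
  | q, [], [] => q ∈ M.accept
  | q, a :: w, p :: ps => p ∈ M.step q a ∧ RunFrom M p w ps
  | _, _ :: _, [] => False
  | _, [], _ :: _ => False

/-- `ps` is an accepting run of `M` on the word `w`: it is a list of states
`p₀, …, p_L` (`L = |w|`) with `p₀ ∈ M.start`, consecutive states related by `M.step`
along the letters of `w`, and the last state accepting. -/
def IsAcceptingRun {α σ : Type*} (M : NFA α σ) (w : List α) (ps : List σ) : Prop :=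
  ∃ p rest, ps = p :: rest ∧ p ∈ M.start ∧ RunFrom M p w rest

open scoped Classical in
/-- The SSB(c)-language of `M`: words having an accepting run in which each state
occurs at most `c` times. -/
noncomputable def SSBLang {α σ : Type*} (M : NFA α σ) (c : ℕ) : Language α :=
  {w | ∃ ps, IsAcceptingRun M w ps ∧ ∀ q : σ, ps.count q ≤ c}

namespace NFA

variable {α σ : Type*} {M : NFA α σ}

theorem acceptsFrom_mono {S T : Set σ} (h : S ⊆ T) : M.acceptsFrom S ≤ M.acceptsFrom T := by
  rw [← Set.union_eq_self_of_subset_left h, acceptsFrom_union]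
  exact fun _ => Or.inl

theorem mem_acceptsFrom_iff_exists {S : Set σ} {x : List α} :
    x ∈ M.acceptsFrom S ↔ ∃ s ∈ S, x ∈ M.acceptsFrom {s} := by
  simp only [mem_acceptsFrom, mem_evalFrom_iff_exists (S := S)]
  grind

theorem mem_evalFrom_cons_of_mem_step {q p t : σ} {a : α} {u : List α}
    (hp : p ∈ M.step q a) (ht : t ∈ M.evalFrom {p} u) : t ∈ M.evalFrom {q} (a :: u) := by
  rw [evalFrom_cons, stepSet_singleton, mem_evalFrom_iff_exists]
  exact ⟨p, hp, ht⟩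

theorem append_mem_acceptsFrom_of_mem_evalFrom {S : Set σ} {t : σ} {u y : List α}
    (ht : t ∈ M.evalFrom S u) (hy : y ∈ M.acceptsFrom {t}) : u ++ y ∈ M.acceptsFrom S := by
  rw [append_mem_acceptsFrom]
  exact acceptsFrom_mono (Set.singleton_subset_iff.2 ht) hy

theorem acceptsFrom_infinite_of_mem_evalFrom_self {p : σ} {v : List α} (hv : v ≠ [])
    (hloop : p ∈ M.evalFrom {p} v) (hne : (M.acceptsFrom {p}).Nonempty) :
    (M.acceptsFrom {p} : Set (List α)).Infinite := by
  intro hfin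
  obtain ⟨x, hx, hmax⟩ := Set.exists_max_image _ List.length hfin hne
  have hlen := hmax (v ++ x) (append_mem_acceptsFrom_of_mem_evalFrom hloop hx)
  rw [List.length_append] at hlen
  exact hv (List.length_eq_zero_iff.1 (by omega))

theorem accepts_infinite_of_acceptsFrom_infinite {p : σ} {u : List α} (hp : p ∈ M.eval u)
    (hinf : (M.acceptsFrom {p} : Set (List α)).Infinite) :
    (M.accepts : Set (List α)).Infinite :=
  ((hinf.image (List.append_right_injective u).injOn).mono) <| by
    rintro _ ⟨y, hy, rfl⟩
    exact append_mem_acceptsFrom_of_mem_evalFrom hp hy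

end NFA

open NFA

section Runs

variable {α σ : Type*} {M : NFA α σ}

theorem exists_runFrom_iff {q : σ} {w : List α} :
    (∃ ps, RunFrom M q w ps) ↔ w ∈ M.acceptsFrom {q} := by
  induction w generalizing q with
  | nil =>
    constructor
    · rintro ⟨_ | _, h⟩
      · simpa [RunFrom] using h
      · exact h.elim
    · exact fun h => ⟨[], by simpa [RunFrom] using h⟩
  | cons a w ih =>
    rw [cons_mem_acceptsFrom, stepSet_singleton, mem_acceptsFrom_iff_exists]
    constructor
    · rintro ⟨_ | ⟨p, ps⟩, h⟩
      · exact h.elim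
      · exact ⟨p, h.1, ih.1 ⟨ps, h.2⟩⟩
    · rintro ⟨p, hp, hw⟩
      obtain ⟨ps, hps⟩ := ih.2 hw
      exact ⟨p :: ps, hp, hps⟩

theorem mem_accepts_iff_exists_isAcceptingRun {w : List α} :
    w ∈ M.accepts ↔ ∃ ps, IsAcceptingRun M w ps := by
  rw [accepts_eq_acceptsFrom_start, mem_acceptsFrom_iff_exists]
  simp only [IsAcceptingRun, ← exists_runFrom_iff]
  grind

theorem RunFrom.exists_split_of_mem {q s : σ} {w : List α} {ps : List σ}
    (h : RunFrom M q w ps) (hs : s ∈ ps) :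
    ∃ v x, v ≠ [] ∧ s ∈ M.evalFrom {q} v ∧ x ∈ M.acceptsFrom {s} := by
  induction w generalizing q ps with
  | nil => cases ps <;> simp_all [RunFrom]
  | cons a w ih =>
    obtain _ | ⟨p, ps⟩ := ps
    · exact h.elim
    obtain ⟨hp, hrun⟩ := h
    rcases List.mem_cons.1 hs with rfl | hs
    · refine ⟨[a], w, List.cons_ne_nil _ _, ?_, exists_runFrom_iff.1 ⟨ps, hrun⟩⟩
      simpa using hp
    · obtain ⟨v, x, hv, hsv, hx⟩ := ih hrun hs
      exact ⟨a :: v, x, List.cons_ne_nil _ _, mem_evalFrom_cons_of_mem_step hp hsv, hx⟩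

theorem RunFrom.exists_loop_of_not_nodup {q : σ} {w : List α} {ps : List σ}
    (h : RunFrom M q w ps) (hnd : ¬ (q :: ps).Nodup) :
    ∃ p u v, v ≠ [] ∧ p ∈ M.evalFrom {q} u ∧ p ∈ M.evalFrom {p} v ∧
      (M.acceptsFrom {p}).Nonempty := by
  induction w generalizing q ps with
  | nil => cases ps <;> simp_all [RunFrom]
  | cons a w ih =>
    obtain _ | ⟨p, ps⟩ := ps
    · exact h.elim
    by_cases hq : q ∈ p :: ps
    · obtain ⟨v, x, hv, hloop, hx⟩ := h.exists_split_of_mem hq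
      exact ⟨q, [], v, hv, rfl, hloop, x, hx⟩
    · obtain ⟨r, u, v, hv, hru, hloop, hne⟩ := ih h.2 fun hnd' => hnd (.cons hq hnd')
      exact ⟨r, a :: u, v, hv, mem_evalFrom_cons_of_mem_step h.1 hru, hloop, hne⟩

theorem IsAcceptingRun.nodup_of_accepts_finite (hfin : (M.accepts : Set (List α)).Finite)
    {w : List α} {ps : List σ} (h : IsAcceptingRun M w ps) : ps.Nodup := by
  obtain ⟨q, rest, rfl, hq, hrun⟩ := h
  by_contra hnd
  obtain ⟨p, u, v, hv, hpu, hloop, hne⟩ := hrun.exists_loop_of_not_nodup hnd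
  have hp : p ∈ M.eval u := mem_evalFrom_iff_exists.2 ⟨q, hq, hpu⟩
  exact accepts_infinite_of_acceptsFrom_infinite hp
    (acceptsFrom_infinite_of_mem_evalFrom_self hv hloop hne) hfin

end Runs

theorem ssb_language_eq_of_finite_language_general
    {α : Type*} {σ : Type*} (M : NFA α σ)
    (hfin : Set.Finite (M.accepts : Set (List α))) :
    (∀ (w : List α) (ps : List σ), IsAcceptingRun M w ps → ps.Nodup) ∧
    (∀ c : ℕ, 1 ≤ c → SSBLang M c = M.accepts) := by
  classical
  have hnodup (w : List α) (ps : List σ) (h : IsAcceptingRun M w ps) : ps.Nodup :=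
    h.nodup_of_accepts_finite hfin
  refine ⟨hnodup, fun c hc => Set.ext fun w => ⟨?_, fun hw => ?_⟩⟩
  · rintro ⟨ps, hps, -⟩
    exact mem_accepts_iff_exists_isAcceptingRun.2 ⟨ps, hps⟩
  · obtain ⟨ps, hps⟩ := mem_accepts_iff_exists_isAcceptingRun.1 hw
    exact ⟨ps, hps, fun q => (List.nodup_iff_count_le_one.1 (hnodup w ps hps) q).trans hc⟩

/-- If an NFA with finite state type accepts a finite language, then every accepting run
visits pairwise distinct states; consequently for every `c ≥ 1` the SSB(c)-language of
`M` equals `L(M)`. -/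
theorem ssb_language_eq_of_finite_language
    {α : Type*} {σ : Type*} [Fintype σ] (M : NFA α σ)
    (hfin : Set.Finite (M.accepts : Set (List α))) :
    (∀ (w : List α) (ps : List σ), IsAcceptingRun M w ps → ps.Nodup) ∧
    (∀ c : ℕ, 1 ≤ c → SSBLang M c = M.accepts) :=
  ssb_language_eq_of_finite_language_general M hfin
end

section
/- Over the two-letter alphabet {a, b}, let L = { a·(b·a)^i : 0 ≤ i ≤ 4 } = {a, aba, ababa, abababa, ababababa}. There exists a nondeterministic finite automaton B with exactly 2 states (states q₀, q₁, start {q₀}, accept {q₁}, transitions q₀ —a→ q₁ and q₁ —b→ q₀ and no others) whose SSB(5)-language is exactly L; whereas every nondeterministic finite automaton A with a finite state type whose accepted language L(A) equals L has at least 10 states. -/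
/-- The letter `a` of the two-letter alphabet `{a, b}`, modeled as `Bool`. -/
def la : Bool := true

/-- The letter `b` of the two-letter alphabet `{a, b}`, modeled as `Bool`. -/
def lb : Bool := false

/-- The alternating word `a·(b·a)^i` of length `2 i + 1`. -/
def altWord (i : ℕ) : List Bool := la :: (List.replicate i [lb, la]).flatten

/-- The language `L = { a·(b·a)^i : 0 ≤ i ≤ 4 }`. -/
def altLang : Language Bool := {w | ∃ i ≤ 4, w = altWord i}

/-- The two-state NFA with states `q₀ = 0`, `q₁ = 1`, start `{q₀}`, accept `{q₁}`, and
transitions `q₀ —a→ q₁` and `q₁ —b→ q₀` only. -/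
def twoStateNFA : NFA Bool (Fin 2) where
  step := fun q x => {p | (q = 0 ∧ x = la ∧ p = 1) ∨ (q = 1 ∧ x = lb ∧ p = 0)}
  start := {0}
  accept := {1}

/-! The two-state automaton has exactly one accepting run on `a (b a)^i`, namely
`q₀ q₁ (q₀ q₁)^i`, in which both states occur `i + 1` times, so the bound 5 cuts its language
off at `i = 4`. Conversely, an accepting run of an NFA with at most 9 states on `a (b a)^4`, a
word of length 9, repeats a state; traversing the loop between the two visits twice yields a
longer accepted word, but `L` has no word longer than 9. -/

namespace NFA

variable {α σ : Type*} {M : NFA α σ}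

theorem Path.exists_split_of_mem_supp [DecidableEq σ] {s t v : σ} {x : List α}
    (p : M.Path s t x) (hv : v ∈ p.supp) :
    ∃ u w, x = u ++ w ∧ v ∈ M.evalFrom {s} u ∧ t ∈ M.evalFrom {v} w := by
  induction p with
  | nil s =>
    obtain rfl : v = s := by simpa using hv
    exact ⟨[], [], rfl, by simp, by simp⟩
  | cons s' s t a x hstep p ih =>
    rcases Finset.mem_union.1 hv with hvs | hvp
    · obtain rfl := Finset.mem_singleton.1 hvs
      exact ⟨[], a :: x, rfl, by simp,
        mem_evalFrom_iff_nonempty_path.2 ⟨Path.cons s' v t a x hstep p⟩⟩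
    · obtain ⟨u, w, rfl, hu, hw⟩ := ih hvp
      refine ⟨a :: u, w, rfl, ?_, hw⟩
      rw [evalFrom_cons, stepSet_singleton, mem_evalFrom_iff_exists]
      exact ⟨s', hstep, hu⟩

theorem Path.exists_pump_of_card_supp_le [DecidableEq σ] {s t : σ} {x : List α}
    (p : M.Path s t x) (hcard : p.supp.card ≤ x.length) :
    ∃ a b c, x = a ++ b ++ c ∧ b ≠ [] ∧ t ∈ M.evalFrom {s} (a ++ b ++ b ++ c) := by
  induction p with
  | nil s => simp at hcard
  | cons s' s t a x hstep p ih =>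
    by_cases hs : s ∈ p.supp
    · obtain ⟨u, w, rfl, hu, hw⟩ := p.exists_split_of_mem_supp hs
      have hloop : s ∈ M.evalFrom {s} (a :: u) := by
        rw [evalFrom_cons, stepSet_singleton, mem_evalFrom_iff_exists]
        exact ⟨s', hstep, hu⟩
      refine ⟨[], a :: u, w, rfl, List.cons_ne_nil _ _, ?_⟩
      rw [List.nil_append, evalFrom_append, mem_evalFrom_iff_exists]
      refine ⟨s, ?_, hw⟩
      rw [evalFrom_append, mem_evalFrom_iff_exists]
      exact ⟨s, hloop, hloop⟩
    · have hcard' : p.supp.card ≤ x.length := by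
        rw [Path.supp, Finset.card_union_of_disjoint (by simpa using hs)] at hcard
        simp only [Finset.card_singleton, List.length_cons] at hcard
        omega
      obtain ⟨a', b, c, rfl, hb, ht⟩ := ih hcard'
      refine ⟨a :: a', b, c, rfl, hb, ?_⟩
      rw [List.cons_append, List.cons_append, List.cons_append, evalFrom_cons, stepSet_singleton,
        mem_evalFrom_iff_exists]
      exact ⟨s', hstep, ht⟩

/-- Unlike `NFA.pumping_lemma`, which goes through the subset automaton, the threshold here is the
number of states rather than the number of sets of states. -/
theorem exists_pump_of_card_le [Fintype σ] {x : List α} (hx : x ∈ M.accepts)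
    (hlen : Fintype.card σ ≤ x.length) :
    ∃ a b c, x = a ++ b ++ c ∧ b ≠ [] ∧ a ++ b ++ b ++ c ∈ M.accepts := by
  classical
  obtain ⟨s, hs, t, ht, ⟨p⟩⟩ := accepts_iff_exists_path.1 hx
  obtain ⟨a, b, c, rfl, hb, hpump⟩ :=
    p.exists_pump_of_card_supp_le ((Finset.card_le_univ _).trans hlen)
  refine ⟨a, b, c, rfl, hb, mem_accepts.2 ⟨t, ht, ?_⟩⟩
  rw [mem_evalFrom_iff_exists]
  exact ⟨s, hs, hpump⟩

theorem length_lt_card_of_forall_length_le [Fintype σ] {x : List α} (hx : x ∈ M.accepts)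
    (hmax : ∀ y ∈ M.accepts, y.length ≤ x.length) : x.length < Fintype.card σ := by
  by_contra! hlen
  obtain ⟨a, b, c, rfl, hb, hpump⟩ := M.exists_pump_of_card_le hx hlen
  have := hmax _ hpump
  simp only [List.length_append] at this
  exact hb (List.length_eq_zero_iff.1 (by omega))

end NFA

/-- `SSBLang` counts occurrences with the classical `DecidableEq` instance; this restates it with
any instance, so that `List.count` computes. -/
theorem mem_ssbLang_iff {α σ : Type*} [DecidableEq σ] {M : NFA α σ} {c : ℕ} {w : List α} :
    w ∈ SSBLang M c ↔ ∃ ps, IsAcceptingRun M w ps ∧ ∀ q : σ, ps.count q ≤ c := by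
  refine exists_congr fun ps => and_congr_right fun _ => forall_congr' fun q => ?_
  convert Iff.rfl

theorem mem_twoStateNFA_step_zero {x : Bool} {p : Fin 2} :
    p ∈ twoStateNFA.step 0 x ↔ x = la ∧ p = 1 := by
  simp [twoStateNFA]

theorem mem_twoStateNFA_step_one {x : Bool} {p : Fin 2} :
    p ∈ twoStateNFA.step 1 x ↔ x = lb ∧ p = 0 := by
  simp [twoStateNFA]

theorem length_flatten_replicate_pair {β : Type*} (i : ℕ) (x y : β) :
    (List.replicate i [x, y]).flatten.length = 2 * i := by
  simp [List.length_flatten, List.sum_replicate, mul_comm]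

theorem altWord_length (i : ℕ) : (altWord i).length = 2 * i + 1 := by
  simp only [altWord, List.length_cons, length_flatten_replicate_pair]

theorem runFrom_twoStateNFA_one_iff :
    ∀ {w : List Bool} {rest : List (Fin 2)}, RunFrom twoStateNFA 1 w rest ↔
      ∃ i, w = (List.replicate i [lb, la]).flatten ∧ rest = (List.replicate i [0, 1]).flatten
  | [], [] => ⟨fun _ => ⟨0, rfl, rfl⟩, fun _ => rfl⟩
  | [], _ :: _ => by simp [RunFrom]
  | _ :: _, [] => by simp [RunFrom]
  | [_], p :: rest => by
    refine iff_of_false ?_ fun ⟨i, hw, _⟩ => ?_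
    · rintro ⟨hp, hrest⟩
      obtain ⟨-, rfl⟩ := mem_twoStateNFA_step_one.1 hp
      cases rest <;> simp [RunFrom, twoStateNFA] at hrest
    · have := congrArg List.length hw
      rw [length_flatten_replicate_pair] at this
      simp at this
      omega
  | _ :: _ :: _, [_] => by
    refine iff_of_false (fun h => h.2) fun ⟨i, _, hrest⟩ => ?_
    have := congrArg List.length hrest
    rw [length_flatten_replicate_pair] at this
    simp at this
    omega
  | x :: y :: w, p :: q :: rest => by
    constructor
    · rintro ⟨hp, hq, hrun⟩
      obtain ⟨rfl, rfl⟩ := mem_twoStateNFA_step_one.1 hp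
      obtain ⟨rfl, rfl⟩ := mem_twoStateNFA_step_zero.1 hq
      obtain ⟨i, rfl, rfl⟩ := runFrom_twoStateNFA_one_iff.1 hrun
      exact ⟨i + 1, by simp [List.replicate_succ], by simp [List.replicate_succ]⟩
    · rintro ⟨_ | i, hw, hrest⟩
      · simp at hw
      simp only [List.replicate_succ, List.flatten_cons, List.cons_append, List.nil_append,
        List.cons.injEq] at hw hrest
      obtain ⟨rfl, rfl, rfl⟩ := hw
      obtain ⟨rfl, rfl, rfl⟩ := hrest
      exact ⟨mem_twoStateNFA_step_one.2 ⟨rfl, rfl⟩, mem_twoStateNFA_step_zero.2 ⟨rfl, rfl⟩,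
        runFrom_twoStateNFA_one_iff.2 ⟨i, rfl, rfl⟩⟩

theorem isAcceptingRun_twoStateNFA_iff {w : List Bool} {ps : List (Fin 2)} :
    IsAcceptingRun twoStateNFA w ps ↔
      ∃ i, w = altWord i ∧ ps = (List.replicate (i + 1) [0, 1]).flatten := by
  constructor
  · rintro ⟨p, rest, rfl, rfl, hrun⟩
    match w, rest, hrun with
    | [], [], hrun => simp [RunFrom, twoStateNFA] at hrun
    | x :: w, q :: rest, ⟨hq, hrun⟩ =>
      obtain ⟨rfl, rfl⟩ := mem_twoStateNFA_step_zero.1 hq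
      obtain ⟨i, rfl, rfl⟩ := runFrom_twoStateNFA_one_iff.1 hrun
      exact ⟨i, rfl, rfl⟩
  · rintro ⟨i, rfl, rfl⟩
    exact ⟨0, _, rfl, rfl, mem_twoStateNFA_step_zero.2 ⟨rfl, rfl⟩,
      runFrom_twoStateNFA_one_iff.2 ⟨i, rfl, rfl⟩⟩

theorem count_flatten_replicate_zero_one (n : ℕ) (q : Fin 2) :
    (List.replicate n [0, 1]).flatten.count q = n := by
  fin_cases q <;> simp [List.count_flatten, List.sum_replicate]

theorem ssbLang_twoStateNFA (c : ℕ) :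
    SSBLang twoStateNFA c = {w | ∃ i < c, w = altWord i} := by
  ext w
  rw [mem_ssbLang_iff]
  constructor
  · rintro ⟨_, hrun, hcount⟩
    obtain ⟨i, rfl, rfl⟩ := isAcceptingRun_twoStateNFA_iff.1 hrun
    have := hcount 0
    rw [count_flatten_replicate_zero_one] at this
    exact ⟨i, this, rfl⟩
  · rintro ⟨i, hi, rfl⟩
    refine ⟨_, isAcceptingRun_twoStateNFA_iff.2 ⟨i, rfl, rfl⟩, fun q => ?_⟩
    rw [count_flatten_replicate_zero_one]
    exact hi

/-- The SSB(5)-language of the explicit two-state NFA is exactly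
`L = {a, aba, ababa, abababa, ababababa}`, whereas every NFA whose accepted language
equals `L` has at least 10 states. -/
theorem ssb_nfa_savings :
    SSBLang twoStateNFA 5 = altLang ∧
    ∀ (σ : Type) [Fintype σ] (A : NFA Bool σ),
      A.accepts = altLang → 10 ≤ Fintype.card σ := by
  refine ⟨(ssbLang_twoStateNFA 5).trans ?_, fun σ _ A hA => ?_⟩
  · ext w
    simp only [altLang, Nat.lt_succ_iff]
  have hmem : altWord 4 ∈ A.accepts := hA ▸ ⟨4, le_rfl, rfl⟩
  have hmax : ∀ y ∈ A.accepts, y.length ≤ (altWord 4).length := by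
    rw [hA]
    rintro _ ⟨i, hi, rfl⟩
    simp only [altWord_length]
    omega
  have hlt := A.length_lt_card_of_forall_length_le hmem hmax
  rwa [altWord_length] at hlt
end
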